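/- For all α, β, x ∈ ℝ and every integer n ≥ 1 one has 2(n+β+1) [ (2n+α−β) + (2n+α+β+2)x ] P_n^{(α,β)}(x) = (n+α)(2n+α+β+2)(1+x)² P_{n−1}^{(α,β+2)}(x) + 4(n+1)(β+1) P_{n+1}^{(α,β)}(x). -/
import Mathlib

noncomputable section

open Finset

/-- Generalized binomial coefficient `C(y, m) = y(y-1)⋯(y-m+1)/m!`. -/
def genBinom (y : ℝ) (m : ℕ) : ℝ :=
  (∏ i ∈ Finset.range m, (y - i)) / (Nat.factorial m)

/-- The Jacobi polynomial
`P_n^{(α,β)}(x) = 2^{-n} ∑_{m=0}^n C(n+α, m) C(n+β, n-m) (x-1)^{n-m} (x+1)^m`. -/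
def jacobiP (α β : ℝ) (n : ℕ) (x : ℝ) : ℝ :=
  (1/2^n) * ∑ m ∈ Finset.range (n+1),
    genBinom ((n : ℝ) + α) m * genBinom ((n : ℝ) + β) (n - m) * (x - 1)^(n - m) * (x + 1)^m

lemma genBinom_zero (y : ℝ) : genBinom y 0 = 1 := by simp [genBinom]

lemma genBinom_one (y : ℝ) : genBinom y 1 = y := by simp [genBinom]

lemma gB_succ (y : ℝ) (m : ℕ) : genBinom y (m+1) * (m+1) = genBinom y m * (y - m) := by
  have hm : (Nat.factorial m : ℝ) ≠ 0 := Nat.cast_ne_zero.mpr m.factorial_ne_zero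
  simp only [genBinom, prod_range_succ, Nat.factorial_succ]
  push_cast
  field_simp

lemma gB_up_succ (y : ℝ) (m : ℕ) : genBinom (y+1) (m+1) * (m+1) = genBinom y m * (y+1) := by
  have hm : (Nat.factorial m : ℝ) ≠ 0 := Nat.cast_ne_zero.mpr m.factorial_ne_zero
  have hp : ∏ i ∈ range (m+1), (y+1-(i:ℝ)) = (∏ i ∈ range m, (y-(i:ℝ))) * (y+1) := by
    rw [prod_range_succ']
    congr 1
    refine prod_congr rfl fun i _ => by push_cast; ring
    norm_num
  simp only [genBinom, hp, Nat.factorial_succ]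
  push_cast
  field_simp

lemma gB_up (y : ℝ) (m : ℕ) : genBinom (y+1) m * (y+1-m) = genBinom y m * (y+1) := by
  have hm : (Nat.factorial m : ℝ) ≠ 0 := Nat.cast_ne_zero.mpr m.factorial_ne_zero
  have hp : (∏ i ∈ range m, (y+1-(i:ℝ))) * (y+1-m) = (∏ i ∈ range m, (y-(i:ℝ))) * (y+1) := by
    rw [← prod_range_succ, prod_range_succ']
    congr 1
    refine prod_congr rfl fun i _ => by push_cast; ring
    norm_num
  simp only [genBinom]
  field_simp
  linear_combination hp

lemma jacobiInterior (α β u v Nr : ℝ) (i j : ℕ) (hN : Nr = i + j + 1) :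
    (Nr+1+β+1)*(β+1) * (genBinom (Nr+1+α) (i+2) * genBinom (Nr+1+β) j) * (u^(j+1) * v^(i+2))
    + (Nr+1+β+1)*(2*(Nr+1)+α+1) * (genBinom (Nr+1+α) (i+1) * genBinom (Nr+1+β) (j+1)) * (u^(j+1) * v^(i+2))
    = (Nr+1+α)*(2*(Nr+1)+α+β+2) * (genBinom (Nr+α) i * genBinom (Nr+(β+2)) (j+1)) * (u^(j+1) * v^(i+2))
    + (Nr+2)*(β+1) * (genBinom (Nr+1+1+α) (i+2) * genBinom (Nr+1+1+β) (j+1)) * (u^(j+1) * v^(i+2)) := by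
  subst hN
  rw [show (i:ℝ)+(j:ℝ)+1+(β+2) = (i:ℝ)+(j:ℝ)+1+1+1+β by ring]
  have h_a1 := gB_up_succ ((i:ℝ)+(j:ℝ)+1+α) i
  rw [show (i:ℝ)+(j:ℝ)+1+α+1 = (i:ℝ)+(j:ℝ)+1+1+α by ring] at h_a1
  have h_a2 := gB_succ ((i:ℝ)+(j:ℝ)+1+1+α) (i+1)
  push_cast at h_a2
  have h_a3 := gB_up_succ ((i:ℝ)+(j:ℝ)+1+1+α) (i+1)
  rw [show (i:ℝ)+(j:ℝ)+1+1+α+1 = (i:ℝ)+(j:ℝ)+1+1+1+α by ring] at h_a3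
  push_cast at h_a3
  have h_b1 := gB_up_succ ((i:ℝ)+(j:ℝ)+1+1+β) j
  rw [show (i:ℝ)+(j:ℝ)+1+1+β+1 = (i:ℝ)+(j:ℝ)+1+1+1+β by ring] at h_b1
  have h_b2 := gB_up ((i:ℝ)+(j:ℝ)+1+1+β) (j+1)
  rw [show (i:ℝ)+(j:ℝ)+1+1+β+1 = (i:ℝ)+(j:ℝ)+1+1+1+β by ring] at h_b2
  push_cast at h_b2
  refine mul_right_cancel₀ (b := ((i:ℝ)+1)*((i:ℝ)+2)) (by positivity) ?_
  set a : ℝ := (i:ℝ)+(j:ℝ)+2+α with ha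
  set b : ℝ := (i:ℝ)+(j:ℝ)+2+β with hb
  set Nn : ℝ := (i:ℝ)+(j:ℝ)+1 with hNn
  set w : ℝ := u^(j+1) * v^(i+2) with hw
  set Bj := genBinom ((i:ℝ)+(j:ℝ)+1+1+β) j with hBj
  set Bj1 := genBinom ((i:ℝ)+(j:ℝ)+1+1+β) (j+1) with hBj1
  set Ej := genBinom ((i:ℝ)+(j:ℝ)+1+1+1+β) (j+1) with hEj
  set D := genBinom ((i:ℝ)+(j:ℝ)+1+α) i with hD
  linear_combination ((b+1)*(β+1)*Bj*((i:ℝ)+1)*w) * h_a2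
    + ((b+1)*(β+1)*Bj*(a-(i:ℝ)-1) + (b+1)*(a+Nn+2)*Bj1*((i:ℝ)+2) - (Nn+2)*(β+1)*(a+1)*Ej)*w * h_a1
    - ((Nn+2)*(β+1)*((i:ℝ)+1)*Ej*w) * h_a3
    - ((β+1)*a*(a-(i:ℝ)-1)*D*w) * h_b1
    - ((a+Nn+2)*a*((i:ℝ)+2)*D*w) * h_b2

theorem jacobiIdentity (α β x : ℝ) (n : ℕ) (hn : 1 ≤ n) :
    2*((n : ℝ) + β + 1) * ((2*(n : ℝ) + α - β) + (2*(n : ℝ) + α + β + 2)*x)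
        * jacobiP α β n x
      = ((n : ℝ) + α)*(2*(n : ℝ) + α + β + 2)*(1 + x)^2 * jacobiP α (β + 2) (n-1) x
        + 4*((n : ℝ) + 1)*(β + 1) * jacobiP α β (n+1) x := by
  obtain ⟨N, rfl⟩ : ∃ N, n = N + 1 := ⟨n - 1, by omega⟩
  simp only [jacobiP, Nat.add_sub_cancel]
  push_cast
  set P : ℕ → ℝ := fun m => ((N:ℝ)+1+β+1)*(β+1) *
    (genBinom ((N:ℝ)+1+α) m * genBinom ((N:ℝ)+1+β) (N+1-m)) * ((x-1)^(N+1+1-m)*(x+1)^m) with hPdef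
  set Q : ℕ → ℝ := fun m => ((N:ℝ)+1+β+1)*(2*((N:ℝ)+1)+α+1) *
    (genBinom ((N:ℝ)+1+α) m * genBinom ((N:ℝ)+1+β) (N+1-m)) * ((x-1)^(N+1-m)*(x+1)^(m+1)) with hQdef
  set R : ℕ → ℝ := fun m => ((N:ℝ)+1+α)*(2*((N:ℝ)+1)+α+β+2) *
    (genBinom ((N:ℝ)+α) m * genBinom ((N:ℝ)+(β+2)) (N-m)) * ((x-1)^(N-m)*(x+1)^(m+2)) with hRdef
  set T : ℕ → ℝ := fun m => ((N:ℝ)+1+1)*(β+1) *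
    (genBinom ((N:ℝ)+1+1+α) m * genBinom ((N:ℝ)+1+1+β) (N+1+1-m)) * ((x-1)^(N+1+1-m)*(x+1)^m) with hTdef
  have hA : ((N:ℝ)+1+β+1)*((β+1)*(x-1)) *
      (∑ m ∈ range (N+1+1), genBinom ((N:ℝ)+1+α) m * genBinom ((N:ℝ)+1+β) (N+1-m) * (x-1)^(N+1-m) * (x+1)^m)
      = ∑ m ∈ range (N+1+1), P m := by
    rw [Finset.mul_sum]
    refine Finset.sum_congr rfl fun m hm => ?_
    simp only [Finset.mem_range] at hm
    simp only [hPdef]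
    rw [show N+1+1-m = (N+1-m)+1 from by omega, pow_succ]
    ring
  have hB : ((N:ℝ)+1+β+1)*((2*((N:ℝ)+1)+α+1)*(x+1)) *
      (∑ m ∈ range (N+1+1), genBinom ((N:ℝ)+1+α) m * genBinom ((N:ℝ)+1+β) (N+1-m) * (x-1)^(N+1-m) * (x+1)^m)
      = ∑ m ∈ range (N+1+1), Q m := by
    rw [Finset.mul_sum]
    refine Finset.sum_congr rfl fun m hm => ?_
    simp only [hQdef]
    ring
  have hC : ((N:ℝ)+1+α)*(2*((N:ℝ)+1)+α+β+2)*((x+1)^2) *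
      (∑ m ∈ range (N+1), genBinom ((N:ℝ)+α) m * genBinom ((N:ℝ)+(β+2)) (N-m) * (x-1)^(N-m) * (x+1)^m)
      = ∑ m ∈ range (N+1), R m := by
    rw [Finset.mul_sum]
    refine Finset.sum_congr rfl fun m hm => ?_
    simp only [hRdef]
    ring
  have hD : ((N:ℝ)+1+1)*(β+1) *
      (∑ m ∈ range (N+1+1+1), genBinom ((N:ℝ)+1+1+α) m * genBinom ((N:ℝ)+1+1+β) (N+1+1-m) * (x-1)^(N+1+1-m) * (x+1)^m)
      = ∑ m ∈ range (N+1+1+1), T m := by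
    rw [Finset.mul_sum]
    refine Finset.sum_congr rfl fun m hm => ?_
    simp only [hTdef]
    ring
  have hmain : (∑ i ∈ range N, P (i+1+1)) + (∑ i ∈ range N, Q (i+1))
      = (∑ i ∈ range N, R i) + (∑ i ∈ range N, T (i+1+1)) := by
    rw [← Finset.sum_add_distrib, ← Finset.sum_add_distrib]
    refine Finset.sum_congr rfl fun i hi => ?_
    simp only [Finset.mem_range] at hi
    obtain ⟨j, hj⟩ : ∃ j, N = i + j + 1 := ⟨N - i - 1, by omega⟩
    simp only [hPdef, hQdef, hRdef, hTdef]
    rw [show N+1-(i+1+1) = j from by omega, show N+1+1-(i+1+1) = j+1 from by omega,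
        show N+1-(i+1) = j+1 from by omega, show N-i = j+1 from by omega]
    have hcast : ((N:ℝ)) = (i:ℝ) + (j:ℝ) + 1 := by rw [hj]; push_cast; ring
    linear_combination jacobiInterior α β (x-1) (x+1) ((N:ℝ)) i j hcast
  have e1 : P 0 = T 0 := by
    simp only [hPdef, hTdef, genBinom_zero, Nat.sub_zero]
    have h := gB_up_succ ((N:ℝ)+1+β) (N+1)
    rw [show (N:ℝ)+1+β+1 = (N:ℝ)+1+1+β by ring] at h
    push_cast at h
    linear_combination (-((β+1)*((x-1)^(N+1+1)*(x+1)^0))) * h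
  have e2 : P 1 + Q 0 = T 1 := by
    simp only [hPdef, hQdef, hTdef, genBinom_zero, genBinom_one, Nat.sub_zero, Nat.add_sub_cancel]
    have h1 := gB_up_succ ((N:ℝ)+1+β) N
    rw [show (N:ℝ)+1+β+1 = (N:ℝ)+1+1+β by ring] at h1
    push_cast at h1
    have h2 := gB_up ((N:ℝ)+1+β) (N+1)
    rw [show (N:ℝ)+1+β+1 = (N:ℝ)+1+1+β by ring] at h2
    push_cast at h2
    linear_combination (-((x-1)^(N+1)*(x+1)^1) * ((β+1)*((N:ℝ)+1+α))) * h1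
      + (-((x-1)^(N+1)*(x+1)^1) * (((N:ℝ)+1+α)+(N:ℝ)+2)) * h2
  have e3 : Q (N+1) = R N + T (N+1+1) := by
    simp only [hQdef, hRdef, hTdef, genBinom_zero, Nat.sub_self,
      show N+1+1-(N+1+1) = 0 from by omega, show N+1-(N+1) = 0 from by omega]
    have h1 := gB_up_succ ((N:ℝ)+α) N
    rw [show (N:ℝ)+α+1 = (N:ℝ)+1+α by ring] at h1
    push_cast at h1
    have h2 := gB_up_succ ((N:ℝ)+1+α) (N+1)
    rw [show (N:ℝ)+1+α+1 = (N:ℝ)+1+1+α by ring] at h2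
    push_cast at h2
    refine mul_right_cancel₀ (b := ((N:ℝ)+1)*((N:ℝ)+2)) (by positivity) ?_
    set w : ℝ := (x-1)^0*(x+1)^(N+1+1) with hw
    set a : ℝ := (N:ℝ)+1+α with ha
    set b : ℝ := (N:ℝ)+1+β with hb
    linear_combination ((b+1)*(a+(N:ℝ)+2)*((N:ℝ)+2) - ((N:ℝ)+2)*(β+1)*(a+1))*w * h1
      - ((β+1)*((N:ℝ)+2)*((N:ℝ)+1))*w * h2
  have K : (∑ m ∈ range (N+1+1), P m) + (∑ m ∈ range (N+1+1), Q m)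
      = (∑ m ∈ range (N+1), R m) + (∑ m ∈ range (N+1+1+1), T m) := by
    rw [Finset.sum_range_succ' P, Finset.sum_range_succ' (fun i => P (i+1)),
        Finset.sum_range_succ Q, Finset.sum_range_succ' Q,
        Finset.sum_range_succ R,
        Finset.sum_range_succ T, Finset.sum_range_succ' T, Finset.sum_range_succ' (fun i => T (i+1))]
    linear_combination hmain + e1 + e2 + e3
  linear_combination (2/(2:ℝ)^(N+1)) * hA + (2/(2:ℝ)^(N+1)) * hB + (2/(2:ℝ)^(N+1)) * K
    - (2/(2:ℝ)^(N+1)) * hC - (2/(2:ℝ)^(N+1)) * hD
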